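/- Let A = −diag(λ₁, …, λ_n) with λ_i > 0 for all i. For every symmetric positive definite P ∈ ℝ^{n×n} such that Q := −(P A + Aᵀ P) is positive definite, one has Γ(P) := 4·λ_max(P)·‖Q^{−1/2}P‖² / (λ_min(Q)·λ_min(P)) ≥ 1/(min_i λ_i)². -/

import Mathlib

open Filter Matrix

/-- Euclidean space `ℝ^n`. -/
abbrev E (n : ℕ) := EuclideanSpace ℝ (Fin n)

/-- Smallest eigenvalue of a (Hermitian) real matrix. -/
noncomputable def lamMin {n : ℕ} (M : Matrix (Fin n) (Fin n) ℝ) : ℝ :=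
  if h : M.IsHermitian then ⨅ i, h.eigenvalues i else 0

/-- Largest eigenvalue of a (Hermitian) real matrix. -/
noncomputable def lamMax {n : ℕ} (M : Matrix (Fin n) (Fin n) ℝ) : ℝ :=
  if h : M.IsHermitian then ⨆ i, h.eigenvalues i else 0

open scoped Classical in
/-- The positive semidefinite square root `M^{1/2}` of a positive semidefinite matrix. -/
noncomputable def matSqrt {n : ℕ} (M : Matrix (Fin n) (Fin n) ℝ) : Matrix (Fin n) (Fin n) ℝ :=
  if h : M.PosSemidef then
    (h.1.eigenvectorUnitary : Matrix (Fin n) (Fin n) ℝ) *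
      diagonal ((↑) ∘ (√·) ∘ h.1.eigenvalues) *
      (star h.1.eigenvectorUnitary : Matrix (Fin n) (Fin n) ℝ)
  else 0

/-- `M^{-1/2} := (M^{1/2})⁻¹`. -/
noncomputable def invSqrt {n : ℕ} (M : Matrix (Fin n) (Fin n) ℝ) : Matrix (Fin n) (Fin n) ℝ :=
  (matSqrt M)⁻¹

/-- Operator norm of a matrix induced by the Euclidean norms. -/
noncomputable def opNorm {m n : ℕ} (M : Matrix (Fin m) (Fin n) ℝ) : ℝ :=
  ‖LinearMap.toContinuousLinearMap (Matrix.toEuclideanLin M)‖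

/-- Matrix-vector multiplication as a map between Euclidean spaces. -/
def mv {m n : ℕ} (M : Matrix (Fin m) (Fin n) ℝ) (v : E n) : E m := WithLp.toLp 2 (M.mulVec v)

/-!
Let `j` minimize `λ` and `e = e_j`. Since `A` is diagonal, `Q_jj = 2 λ_j P_jj`. Writing
`P_jj = ⟪Q^{1/2} e, Q^{-1/2} P e⟫`, Cauchy–Schwarz gives `P_jj² ≤ Q_jj ‖Q^{-1/2} P‖²`, that is
`P_jj ≤ 2 λ_j ‖Q^{-1/2} P‖²`. Together with `λ_min(Q) ≤ Q_jj` and `λ_min(P) ≤ P_jj ≤ λ_max(P)` this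
gives `λ_min(Q) λ_min(P) ≤ 4 λ_j² λ_max(P) ‖Q^{-1/2} P‖²`.
-/
open scoped MatrixOrder

section Eigenvalues

variable {n : ℕ} {M : Matrix (Fin n) (Fin n) ℝ}

lemma lamMin_le_apply_self (hM : M.IsHermitian) (j : Fin n) : lamMin M ≤ M j j := by
  have hle : algebraMap ℝ _ (lamMin M) ≤ M := by
    rw [algebraMap_le_iff_le_spectrum hM, hM.spectrum_real_eq_range_eigenvalues]
    rintro _ ⟨i, rfl⟩
    rw [lamMin, dif_pos hM]
    exact ciInf_le (Finite.bddBelow_range _) i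
  simpa [algebraMap_eq_diagonal] using (Matrix.le_iff.1 hle).diag_nonneg (i := j)

lemma apply_self_le_lamMax (hM : M.IsHermitian) (j : Fin n) : M j j ≤ lamMax M := by
  have hle : M ≤ algebraMap ℝ _ (lamMax M) := by
    rw [le_algebraMap_iff_spectrum_le hM, hM.spectrum_real_eq_range_eigenvalues]
    rintro _ ⟨i, rfl⟩
    rw [lamMax, dif_pos hM]
    exact le_ciSup (Finite.bddAbove_range _) i
  simpa [algebraMap_eq_diagonal] using (Matrix.le_iff.1 hle).diag_nonneg (i := j)

lemma lamMin_pos [NeZero n] (hM : M.PosDef) : 0 < lamMin M := by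
  rw [lamMin, dif_pos hM.1]
  obtain ⟨i, hi⟩ := exists_eq_ciInf_of_finite (f := hM.1.eigenvalues)
  exact hi ▸ hM.eigenvalues_pos i

end Eigenvalues

section MatSqrt

variable {n : ℕ}

lemma isHermitian_matSqrt (M : Matrix (Fin n) (Fin n) ℝ) : (matSqrt M).IsHermitian := by
  unfold matSqrt
  split_ifs
  · exact isHermitian_mul_mul_conjTranspose _ (isHermitian_diagonal _)
  · exact isHermitian_zero

variable {M : Matrix (Fin n) (Fin n) ℝ}

lemma matSqrt_mul_self (hM : M.PosSemidef) : matSqrt M * matSqrt M = M := by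
  have hsqrt (i) : √(hM.1.eigenvalues i) * √(hM.1.eigenvalues i) = hM.1.eigenvalues i :=
    Real.mul_self_sqrt (hM.eigenvalues_nonneg i)
  conv_rhs => rw [hM.1.spectral_theorem, Unitary.conjStarAlgAut_apply]
  rw [matSqrt, dif_pos hM]
  simp only [Matrix.mul_assoc]
  rw [← Matrix.mul_assoc (star _) (Subtype.val _), Unitary.coe_star_mul_self, Matrix.one_mul,
    ← Matrix.mul_assoc (diagonal _), diagonal_mul_diagonal]
  simp [hsqrt]

lemma isUnit_det_matSqrt (hM : M.PosDef) : IsUnit (matSqrt M).det := by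
  have hdet := hM.det_pos
  rw [← matSqrt_mul_self hM.posSemidef, det_mul] at hdet
  exact isUnit_iff_ne_zero.2 fun h ↦ by simp [h] at hdet

end MatSqrt

section EuclideanBounds

open scoped RealInnerProductSpace

variable {n : ℕ}

lemma mv_mul (M N : Matrix (Fin n) (Fin n) ℝ) (x : E n) : mv (M * N) x = mv M (mv N x) := by
  simp [mv, Matrix.mulVec_mulVec]

lemma Matrix.IsHermitian.inner_mv {S : Matrix (Fin n) (Fin n) ℝ} (hS : S.IsHermitian) (x y : E n) :
    ⟪mv S x, y⟫ = ⟪x, mv S y⟫ :=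
  isSymmetric_toEuclideanLin_iff.2 hS x y

lemma norm_mv_le (M : Matrix (Fin n) (Fin n) ℝ) (x : E n) : ‖mv M x‖ ≤ opNorm M * ‖x‖ :=
  (LinearMap.toContinuousLinearMap (Matrix.toEuclideanLin M)).le_opNorm x

lemma inner_single_mv_single (M : Matrix (Fin n) (Fin n) ℝ) (j : Fin n) :
    ⟪EuclideanSpace.single j 1, mv M (EuclideanSpace.single j 1)⟫ = M j j := by
  simp [mv, EuclideanSpace.inner_single_left]

lemma sq_inner_mv_le {S : Matrix (Fin n) (Fin n) ℝ} (hS : S.IsHermitian) (hdet : IsUnit S.det)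
    (P : Matrix (Fin n) (Fin n) ℝ) (x : E n) :
    ⟪x, mv P x⟫ ^ 2 ≤ ⟪x, mv (S * S) x⟫ * (opNorm (S⁻¹ * P) * ‖x‖) ^ 2 := by
  have hPx : mv P x = mv S (mv (S⁻¹ * P) x) := by
    rw [← mv_mul, ← Matrix.mul_assoc, mul_nonsing_inv _ hdet, Matrix.one_mul]
  have hSx : ‖mv S x‖ ^ 2 = ⟪x, mv (S * S) x⟫ := by
    rw [mv_mul, ← hS.inner_mv, real_inner_self_eq_norm_sq]
  calc ⟪x, mv P x⟫ ^ 2 = |⟪mv S x, mv (S⁻¹ * P) x⟫| ^ 2 := by rw [hPx, hS.inner_mv, sq_abs]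
    _ ≤ (‖mv S x‖ * (opNorm (S⁻¹ * P) * ‖x‖)) ^ 2 := by
      gcongr
      exact (abs_real_inner_le_norm _ _).trans (by gcongr; exact norm_mv_le _ _)
    _ = ⟪x, mv (S * S) x⟫ * (opNorm (S⁻¹ * P) * ‖x‖) ^ 2 := by rw [mul_pow, hSx]

end EuclideanBounds

theorem stmt14 {n : ℕ} [NeZero n] (lam : Fin n → ℝ) (hlam : ∀ i, 0 < lam i)
    (A : Matrix (Fin n) (Fin n) ℝ) (hA : A = -Matrix.diagonal lam)
    (P Q : Matrix (Fin n) (Fin n) ℝ) (hP : P.PosDef)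
    (hQdef : Q = -(P * A + Aᵀ * P)) (hQ : Q.PosDef) :
    4 * lamMax P * (opNorm (invSqrt Q * P)) ^ 2 / (lamMin Q * lamMin P) ≥
      1 / (⨅ i, lam i) ^ 2 := by
  obtain ⟨j, hj⟩ := exists_eq_ciInf_of_finite (f := lam)
  have hQjj : Q j j = 2 * lam j * P j j := by
    simp only [hQdef, hA, diagonal_neg, diagonal_transpose, neg_add_rev, Matrix.add_apply,
      Matrix.neg_apply, diagonal_mul, neg_mul, neg_neg, mul_diagonal, mul_neg]
    ring
  have hPjj : P j j ≤ 2 * lam j * opNorm (invSqrt Q * P) ^ 2 := by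
    have h := sq_inner_mv_le (isHermitian_matSqrt Q) (isUnit_det_matSqrt hQ) P
      (EuclideanSpace.single j 1)
    rw [matSqrt_mul_self hQ.posSemidef, inner_single_mv_single, inner_single_mv_single,
      PiLp.norm_single, norm_one, mul_one, hQjj, ← invSqrt] at h
    exact le_of_mul_le_mul_left (a := P j j) (by linarith) hP.diag_pos
  have hPmin := (lamMin_le_apply_self hP.1 j).trans (apply_self_le_lamMax hP.1 j)
  have hlamj := hlam j
  rw [← hj, ge_iff_le, div_le_div_iff₀ (by positivity) (mul_pos (lamMin_pos hQ) (lamMin_pos hP))]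
  calc 1 * (lamMin Q * lamMin P) ≤ 2 * lam j * P j j * lamMax P := by
        rw [one_mul, ← hQjj]
        exact mul_le_mul (lamMin_le_apply_self hQ.1 j) hPmin (lamMin_pos hP).le hQ.diag_pos.le
    _ ≤ 2 * lam j * (2 * lam j * opNorm (invSqrt Q * P) ^ 2) * lamMax P := by
        gcongr
        exact (lamMin_pos hP).le.trans hPmin
    _ = 4 * lamMax P * opNorm (invSqrt Q * P) ^ 2 * lam j ^ 2 := by ring
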